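/- arXiv:2009.13317 — 2 statements merged into one kernel-verified Lean document; each statement's English description precedes it below -/
import Mathlib

section
/- Let D be a finite set of n points in ℝ^d, let O be a set of k centers with k-median cost Σ_{p∈D} d(p,O) = R·n for some R > 0, and let ε ∈ (0,1/2]. Define T = {εR(1+ε)^j : j = 0,1,...,⌈log_{1+ε}(n/ε)⌉}. Then there exists a set S of centers with |S| ≤ k · (1/ε)^{O(d)} · O(log(n/ε)) such that Σ_{p∈D} d(p,S) ≤ 3εRn. -/
/-!
Around each center `o ∈ O` put an `ε`-net of each ball `closedBall o (2 ^ j * ε * R)`, `j ≤ J`,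
with `2 ^ J ≥ n / ε`; since every data point is within `R * n` of `O`, the largest ball catches it.
A point at distance `r` from its nearest center lies in the smallest of these balls of radius at
most `max (ε * R) (2 * r)`, so the net of that ball has a point within `ε * (ε * R + 2 * r)`.
Summing over the data gives cost `ε ^ 2 * R * n + 2 * ε * R * n ≤ 3 * ε * R * n`. Each net has
at most `(1 + 2 / ε) ^ d` points by the volume (packing) argument, and `J + 1 = O(log (n / ε))`.
-/

open Metric Finset MeasureTheory Module
open scoped ENNReal NNReal

theorem exists_le_two_pow_mul_le_max {a r : ℝ} {J : ℕ} (hr : r ≤ 2 ^ J * a) :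
    ∃ j ≤ J, r ≤ 2 ^ j * a ∧ 2 ^ j * a ≤ max a (2 * r) := by
  induction J with
  | zero => exact ⟨0, le_rfl, by simpa using hr, by simp⟩
  | succ J ih =>
    by_cases hJ : r ≤ 2 ^ J * a
    · obtain ⟨j, hj, hjr⟩ := ih hJ
      exact ⟨j, hj.trans J.le_succ, hjr⟩
    · refine ⟨J + 1, le_rfl, hr, le_max_of_le_right ?_⟩
      rw [pow_succ]
      linarith

theorem exists_le_two_pow_add_one_le_log {x : ℝ} (hx : 2 ≤ x) :
    ∃ J : ℕ, x ≤ 2 ^ J ∧ (J : ℝ) + 1 ≤ 5 * Real.log x := by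
  refine ⟨⌈Real.logb 2 x⌉₊, ?_, ?_⟩
  · calc x = 2 ^ Real.logb 2 x := (Real.rpow_logb two_pos (by norm_num) (by linarith)).symm
      _ ≤ 2 ^ (⌈Real.logb 2 x⌉₊ : ℝ) :=
          Real.rpow_le_rpow_of_exponent_le one_le_two (Nat.le_ceil _)
      _ = 2 ^ ⌈Real.logb 2 x⌉₊ := Real.rpow_natCast 2 _
  · have hlog2 := Real.log_two_gt_d9
    have hlogx : Real.log 2 ≤ Real.log x := Real.log_le_log two_pos hx
    have hceil := Nat.ceil_lt_add_one (Real.logb_nonneg one_lt_two (by linarith : 1 ≤ x))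
    have hratio : Real.log x / Real.log 2 ≤ 1.45 * Real.log x := by
      rw [div_le_iff₀ (by linarith)]
      nlinarith
    rw [Real.logb] at hceil ⊢
    linarith

theorem one_add_two_div_pow_le {ε : ℝ} (hε : 0 < ε) (hε2 : ε ≤ 1 / 2) (d : ℕ) :
    (1 + 2 / ε) ^ d ≤ (1 / ε) ^ (5 * d : ℝ) := by
  have hu : 2 ≤ 1 / ε := by rw [le_div_iff₀ hε]; linarith
  have hbase : 1 + 2 / ε ≤ (1 / ε) ^ 5 := by
    have : 2 / ε = 2 * (1 / ε) := by ring
    rw [this]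
    nlinarith [pow_le_pow_left₀ (by norm_num) hu 4]
  calc (1 + 2 / ε) ^ d ≤ ((1 / ε) ^ 5) ^ d := pow_le_pow_left₀ (by positivity) hbase d
    _ = (1 / ε) ^ (5 * d : ℝ) := by rw [← pow_mul, ← Real.rpow_natCast]; push_cast; rfl

theorem Finset.cast_card_biUnion_le_mul {ι α : Type*} [DecidableEq α] (s : Finset ι)
    (t : ι → Finset α) {M : ℝ} (h : ∀ i ∈ s, ((t i).card : ℝ) ≤ M) :
    ((s.biUnion t).card : ℝ) ≤ s.card * M :=
  calc ((s.biUnion t).card : ℝ) ≤ ∑ i ∈ s, ((t i).card : ℝ) := by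
        exact_mod_cast card_biUnion_le
    _ ≤ ∑ _i ∈ s, M := sum_le_sum h
    _ = s.card * M := by rw [sum_const, nsmul_eq_mul]

section FiniteDimensional

variable {E : Type*} [NormedAddCommGroup E] [NormedSpace ℝ E] [FiniteDimensional ℝ E]

theorem Finset.card_le_of_isSeparated_subset_closedBall {s : Finset E} {x : E} {r : ℝ}
    {δ : ℝ≥0} (hr : 0 ≤ r) (hδ : 0 < δ) (hs : (s : Set E) ⊆ closedBall x r)
    (hsep : IsSeparated δ (s : Set E)) :
    (s.card : ℝ) ≤ (1 + 2 * r / δ) ^ finrank ℝ E := by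
  borelize E
  set μ : Measure E := Measure.addHaar
  set ρ : ℝ := δ / 2
  have hρ : 0 < ρ := by positivity
  have hdisj : (s : Set E).PairwiseDisjoint (ball · ρ) := by
    intro c hc c' hc' hne
    refine ball_disjoint_ball ?_
    have : (δ : ℝ≥0∞) < edist c c' := hsep hc hc' hne
    rw [edist_nndist, ENNReal.coe_lt_coe, ← NNReal.coe_lt_coe, coe_nndist] at this
    exact (add_halves (δ : ℝ)).le.trans this.le
  have hsub : (⋃ c ∈ s, ball c ρ) ⊆ ball x (r + ρ) :=
    Set.iUnion₂_subset fun c hc => ball_subset_ball' (by linarith [mem_closedBall.1 (hs hc)])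
  have hvol : (s.card : ℝ≥0∞) * ENNReal.ofReal (ρ ^ finrank ℝ E) * μ (ball 0 1)
      ≤ ENNReal.ofReal ((r + ρ) ^ finrank ℝ E) * μ (ball 0 1) := by
    calc (s.card : ℝ≥0∞) * ENNReal.ofReal (ρ ^ finrank ℝ E) * μ (ball 0 1)
        = μ (⋃ c ∈ s, ball c ρ) := by
          rw [measure_biUnion_finset hdisj fun c _ => measurableSet_ball]
          simp only [μ.addHaar_ball_of_pos _ hρ, Finset.sum_const, nsmul_eq_mul, mul_assoc]
      _ ≤ μ (ball x (r + ρ)) := measure_mono hsub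
      _ = _ := μ.addHaar_ball_of_pos _ (by positivity)
  have hvol' := (ENNReal.mul_le_mul_iff_left (measure_ball_pos μ (0 : E) one_pos).ne'
    measure_ball_lt_top.ne).1 hvol
  have hcount : (s.card : ℝ) * ρ ^ finrank ℝ E ≤ (r + ρ) ^ finrank ℝ E := by
    have := ENNReal.toReal_le_of_le_ofReal (by positivity) hvol'
    rwa [ENNReal.toReal_mul, ENNReal.toReal_ofReal (by positivity), ENNReal.toReal_natCast]
      at this
  have hratio : 1 + 2 * r / δ = (r + ρ) / ρ := by
    simp only [ρ]; field_simp; ring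
  rw [hratio, div_pow, le_div_iff₀ (by positivity)]
  exact hcount

theorem packingNumber_closedBall_le (x : E) {r : ℝ} {δ : ℝ≥0} (hr : 0 ≤ r) (hδ : 0 < δ) :
    packingNumber δ (closedBall x r) ≤ ⌊(1 + 2 * r / δ) ^ finrank ℝ E⌋₊ := by
  refine iSup₂_le fun C hC => iSup_le fun hsep => ?_
  by_contra! hlt
  obtain ⟨t, htC, ht⟩ := Set.exists_subset_encard_eq (Order.add_one_le_of_lt hlt)
  have htfin : t.Finite := Set.finite_of_encard_eq_coe ht
  have hcard := htfin.toFinset.card_le_of_isSeparated_subset_closedBall hr hδ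
    (by simpa using htC.trans hC) (by simpa using hsep.subset htC)
  rw [htfin.encard_eq_coe_toFinset_card] at ht
  norm_cast at ht
  rw [ht] at hcard
  push_cast at hcard
  exact (Nat.lt_floor_add_one _).not_ge hcard

theorem exists_net_closedBall (x : E) {r ε : ℝ} (hr : 0 < r) (hε : 0 < ε) :
    ∃ N : Finset E, (N.card : ℝ) ≤ (1 + 2 / ε) ^ finrank ℝ E ∧
      ∀ y ∈ closedBall x r, ∃ z ∈ N, dist y z ≤ ε * r := by
  set δ := (ε * r).toNNReal
  have hδ : (δ : ℝ) = ε * r := Real.coe_toNNReal _ (by positivity)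
  have hpack := packingNumber_closedBall_le x hr.le (Real.toNNReal_pos.2 (by positivity) : 0 < δ)
  rw [hδ, show 2 * r / (ε * r) = 2 / ε by field_simp] at hpack
  have hfin : packingNumber δ (closedBall x r) ≠ ⊤ :=
    ne_top_of_le_ne_top (ENat.natCast_ne_top _) hpack
  have hN := encard_maximalSeparatedSet hfin
  have hNfin : (maximalSeparatedSet δ (closedBall x r)).Finite :=
    Set.finite_of_encard_le_coe (hN.trans_le hpack)
  refine ⟨hNfin.toFinset, ?_, fun y hy => ?_⟩
  · rw [hNfin.encard_eq_coe_toFinset_card] at hN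
    have hcard : hNfin.toFinset.card ≤ ⌊(1 + 2 / ε) ^ finrank ℝ E⌋₊ := by
      exact_mod_cast hN.trans_le hpack
    exact (Nat.cast_le.2 hcard).trans (Nat.floor_le (by positivity))
  · have := (isCover_maximalSeparatedSet hfin).subset_iUnion_closedBall hy
    simp only [Set.mem_iUnion, mem_closedBall, exists_prop] at this
    obtain ⟨z, hz, hyz⟩ := this
    exact ⟨z, by simpa using hz, hδ ▸ hyz⟩

theorem exists_multiscale_net (o : E) {a ε : ℝ} (ha : 0 < a) (hε : 0 < ε) (J : ℕ) :
    ∃ N : Finset E, (N.card : ℝ) ≤ (J + 1) * (1 + 2 / ε) ^ finrank ℝ E ∧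
      ∀ y, dist y o ≤ 2 ^ J * a → ∃ z ∈ N, dist y z ≤ ε * (a + 2 * dist y o) := by
  classical
  choose net hnet_card hnet using fun j : ℕ =>
    exists_net_closedBall o (by positivity : 0 < 2 ^ j * a) hε
  refine ⟨(range (J + 1)).biUnion net, ?_, fun y hy => ?_⟩
  · simpa using cast_card_biUnion_le_mul (range (J + 1)) net fun j _ => hnet_card j
  · obtain ⟨j, hjJ, hyj, hj⟩ := exists_le_two_pow_mul_le_max hy
    obtain ⟨z, hz, hyz⟩ := hnet j y (mem_closedBall.2 hyj)
    refine ⟨z, mem_biUnion.2 ⟨j, mem_range.2 (Nat.lt_succ_of_le hjJ), hz⟩, hyz.trans ?_⟩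
    have hmax : max a (2 * dist y o) ≤ a + 2 * dist y o :=
      max_le (by linarith [dist_nonneg (x := y) (y := o)]) (by linarith)
    exact mul_le_mul_of_nonneg_left (hj.trans hmax) hε.le

end FiniteDimensional

theorem infDist_biUnion_le {X : Type*} [PseudoMetricSpace X] [DecidableEq X] {O : Finset X}
    (hO : O.Nonempty) {N : X → Finset X} {p : X} {ρ a ε : ℝ} (hp : infDist p O ≤ ρ)
    (hN : ∀ o ∈ O, ∀ y, dist y o ≤ ρ → ∃ z ∈ N o, dist y z ≤ ε * (a + 2 * dist y o)) :
    infDist p (O.biUnion N : Set X) ≤ ε * (a + 2 * infDist p O) := by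
  obtain ⟨o, ho, hpo⟩ :=
    O.finite_toSet.isCompact.exists_infDist_eq_dist (by simpa using hO) p
  obtain ⟨z, hz, hpz⟩ := hN o ho p (hpo ▸ hp)
  rw [hpo]
  exact (infDist_le_dist_of_mem (by simpa using ⟨o, ho, hz⟩)).trans hpz

/-- bi-criteria center set with `k·(1/ε)^{O(d)}·O(log(n/ε))` centers
and cost at most `3εRn`. -/
theorem bicriteria_centers :
    ∃ c : ℝ, 0 < c ∧
      ∀ (d k : ℕ) (D O : Finset (EuclideanSpace ℝ (Fin d))) (R ε : ℝ),
        D.Nonempty → O.Nonempty → O.card = k → 0 < R → 0 < ε → ε ≤ 1 / 2 →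
        (∑ p ∈ D, Metric.infDist p (O : Set (EuclideanSpace ℝ (Fin d)))) = R * D.card →
        ∃ S : Finset (EuclideanSpace ℝ (Fin d)),
          (S.card : ℝ) ≤ (k : ℝ) * (1 / ε) ^ (c * d) * (c * Real.log ((D.card : ℝ) / ε)) ∧
          (∑ p ∈ D, Metric.infDist p (S : Set (EuclideanSpace ℝ (Fin d)))) ≤ 3 * ε * R * D.card := by
  classical
  refine ⟨5, by norm_num, fun d k D O R ε hD hO hk hR hε hε2 hcost => ?_⟩
  have hn : (1 : ℝ) ≤ D.card := by exact_mod_cast hD.card_pos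
  obtain ⟨J, hJ, hJ_log⟩ := exists_le_two_pow_add_one_le_log (x := D.card / ε)
    (by rw [le_div_iff₀ hε]; linarith)
  choose N hN_card hN_net using fun o : EuclideanSpace ℝ (Fin d) =>
    exists_multiscale_net o (mul_pos hε hR) hε J
  rw [finrank_euclideanSpace_fin] at hN_card
  refine ⟨O.biUnion N, ?_, ?_⟩
  · calc ((O.biUnion N).card : ℝ) ≤ k * ((J + 1) * (1 + 2 / ε) ^ d) :=
          hk ▸ cast_card_biUnion_le_mul O N fun o _ => hN_card o
      _ = k * (1 + 2 / ε) ^ d * (J + 1) := by ring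
      _ ≤ k * (1 / ε) ^ (5 * d : ℝ) * (5 * Real.log (D.card / ε)) := by
          gcongr
          exact one_add_two_div_pow_le hε hε2 d
  · have hρ : R * D.card ≤ 2 ^ J * (ε * R) :=
      calc R * D.card = D.card / ε * (ε * R) := by field_simp
        _ ≤ 2 ^ J * (ε * R) := by gcongr
    have hfar : ∀ p ∈ D, infDist p O ≤ 2 ^ J * (ε * R) := fun p hp =>
      (hcost ▸ single_le_sum (fun q _ => infDist_nonneg) hp).trans hρ
    calc ∑ p ∈ D, infDist p (O.biUnion N : Set _)
        ≤ ∑ p ∈ D, ε * (ε * R + 2 * infDist p O) :=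
          sum_le_sum fun p hp => infDist_biUnion_le hO (hfar p hp) fun o _ => hN_net o
      _ = ε * R * D.card * (ε + 2) := by
          rw [← mul_sum, sum_add_distrib, ← mul_sum, ← mul_sum, hcost, sum_const, nsmul_eq_mul]
          ring
      _ ≤ ε * R * D.card * 3 := by gcongr; linarith
      _ = 3 * ε * R * D.card := by ring
end

section
/- Let D be a finite set of n points in ℝ^d, ε ∈ (0,1/2], and let OPT_k denote the optimal k-median cost of D. Then for k' = k·(1/ε)^{c·d}·⌈log(n/ε)/log(1+ε)⌉ (for a suitable absolute constant c), the optimal k'-median cost satisfies OPT_{k'} ≤ 3ε·OPT_k. -/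
open Metric

/-- k-median clustering cost of a finite point set w.r.t. a center set. -/
noncomputable def kmedCost (d : ℕ) (D : Finset (EuclideanSpace ℝ (Fin d)))
    (C : Set (EuclideanSpace ℝ (Fin d))) : ℝ :=
  ∑ p ∈ D, Metric.infDist p C

/-- optimal m-median cost with at most `m` centers. -/
noncomputable def kmedOPT (d : ℕ) (m : ℕ) (D : Finset (EuclideanSpace ℝ (Fin d))) : ℝ :=
  sInf {x : ℝ | ∃ C : Finset (EuclideanSpace ℝ (Fin d)),
    C.Nonempty ∧ C.card ≤ m ∧ kmedCost d D (C : Set (EuclideanSpace ℝ (Fin d))) = x}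

/-!
Fix a `k`-center set `C` of cost `W` and put `b = εW/n`. Every point `p` lies at distance
`r(p) ≤ W ≤ b(1+ε)^M` from its nearest center `c`, where `M = ⌈log(n/ε)/log(1+ε)⌉`, so it
belongs to one of the `k·M` classes `(c, j)`, `j < M`, with `r(p) ≤ b(1+ε)^(j+1)` and
`b(1+ε)^j ≤ max(b, r(p))`. A maximal `2εb(1+ε)^j`-separated subset of a class covers it, and
comparing the volumes of the disjoint balls of half that radius with the volume of
`B(c, b(1+ε)^(j+1) + εb(1+ε)^j)` shows that it has at most `(2 + 1/ε)^d ≤ (1/ε)^(2d)` points.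
Using all these nets as centers moves each `p` by at most `2ε·max(b, r(p)) ≤ b + 2ε·r(p)`, for a
total cost of at most `nb + 2εW = 3εW`.
-/

open MeasureTheory Module
open scoped NNReal ENNReal

theorem exists_subset_isSeparated_isCover {X : Type*} [PseudoMetricSpace X] (P : Finset X)
    (ε : ℝ≥0) : ∃ F ⊆ P, IsSeparated (ε : ℝ≥0∞) (F : Set X) ∧ IsCover ε (P : Set X) F := by
  have hfin : {N : Set X | N ⊆ P ∧ IsSeparated (ε : ℝ≥0∞) N}.Finite :=
    P.finite_toSet.finite_subsets.subset fun _ hN => hN.1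
  obtain ⟨N, hN⟩ := hfin.exists_maximal ⟨∅, Set.empty_subset _, .empty⟩
  have hNfin : N.Finite := P.finite_toSet.subset hN.prop.1
  refine ⟨hNfin.toFinset, by simpa using hN.prop.1, by simpa using hN.prop.2, ?_⟩
  simpa using IsCover.of_maximal_isSeparated hN

theorem Metric.IsSeparated.card_le_of_subset_closedBall {E : Type*} [NormedAddCommGroup E]
    [NormedSpace ℝ E] [FiniteDimensional ℝ E] {F : Finset E} {ε : ℝ≥0} {c : E} {R : ℝ}
    (hε : 0 < ε) (hR : 0 ≤ R) (hF : IsSeparated (ε : ℝ≥0∞) (F : Set E))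
    (hFR : (F : Set E) ⊆ closedBall c R) :
    (F.card : ℝ) ≤ (1 + 2 * R / ε) ^ finrank ℝ E := by
  borelize E
  set μ : Measure E := Measure.addHaar
  set r : ℝ := ε / 2 with hr_def
  have hr : 0 < r := by positivity
  have hball : ∀ (x : E) (s : ℝ), 0 < s →
      μ.real (ball x s) = s ^ finrank ℝ E * μ.real (ball 0 1) := by
    intro x s hs
    rw [measureReal_def, Measure.addHaar_ball_of_pos μ x hs, ENNReal.toReal_mul,
      ENNReal.toReal_ofReal (by positivity), measureReal_def]
  have hdisj : (F : Set E).PairwiseDisjoint (ball · r) := by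
    intro x hx y hy hxy
    refine ball_disjoint_ball ?_
    have hsep : (ε : ℝ≥0∞) < edist x y := hF hx hy hxy
    rw [edist_nndist, ENNReal.coe_lt_coe, ← NNReal.coe_lt_coe, coe_nndist] at hsep
    linarith
  have hsub : (⋃ x ∈ F, ball x r) ⊆ ball c (R + r) := by
    simp only [Set.iUnion_subset_iff]
    intro x hx y hy
    have hxc := mem_closedBall.1 (hFR hx)
    have htri := dist_triangle y x c
    rw [mem_ball] at hy ⊢
    linarith
  have hpack : (F.card : ℝ) * r ^ finrank ℝ E ≤ (R + r) ^ finrank ℝ E := by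
    have hV : 0 < μ.real (ball (0 : E) 1) :=
      ENNReal.toReal_pos (measure_ball_pos μ 0 one_pos).ne' measure_ball_lt_top.ne
    have hvol : ∑ x ∈ F, μ.real (ball x r) ≤ μ.real (ball c (R + r)) := by
      rw [← measureReal_biUnion_finset hdisj fun _ _ => measurableSet_ball]
      exact measureReal_mono hsub
    simp only [hball _ _ hr, hball _ _ (by positivity : 0 < R + r), Finset.sum_const,
      nsmul_eq_mul] at hvol
    nlinarith
  calc (F.card : ℝ) ≤ (R + r) ^ finrank ℝ E / r ^ finrank ℝ E := by
        rwa [le_div_iff₀ (by positivity)]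
    _ = (1 + 2 * R / ε) ^ finrank ℝ E := by
        rw [← div_pow, hr_def]
        congr 1
        field_simp
        ring

theorem exists_lt_le_mul_pow_succ_and_mul_pow_le_max {R : Type*} [Monoid R] [LinearOrder R]
    {b q r : R} {M : ℕ} (hM : 0 < M) (hr : r ≤ b * q ^ M) :
    ∃ j < M, r ≤ b * q ^ (j + 1) ∧ b * q ^ j ≤ max b r := by
  classical
  have hlast : r ≤ b * q ^ (M - 1 + 1) := by rwa [Nat.sub_add_cancel hM]
  have hex : ∃ j, r ≤ b * q ^ (j + 1) := ⟨M - 1, hlast⟩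
  refine ⟨Nat.find hex, (Nat.find_min' hex hlast).trans_lt (Nat.sub_lt hM one_pos),
    Nat.find_spec hex, ?_⟩
  rcases h : Nat.find hex with _ | i
  · simp
  · exact le_max_of_le_right (not_le.1 (Nat.find_min hex (by omega : i < Nat.find hex))).le

theorem le_pow_natCeil_log_div_log {x q : ℝ} (hq : 1 < q) :
    x ≤ q ^ ⌈Real.log x / Real.log q⌉₊ := by
  refine Real.le_pow_of_log_le (by linarith) ?_
  rw [← div_le_iff₀ (Real.log_pos hq)]
  exact Nat.le_ceil _

theorem two_add_one_div_pow_le_rpow {ε : ℝ} (hε : 0 < ε) (hε2 : ε ≤ 1 / 2) (d : ℕ) :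
    (2 + 1 / ε) ^ d ≤ (1 / ε) ^ (2 * (d : ℝ)) := by
  rw [show (2 : ℝ) * d = ((2 * d : ℕ) : ℝ) by push_cast; ring, Real.rpow_natCast, pow_mul]
  gcongr
  rw [div_pow, one_pow, le_div_iff₀ (by positivity)]
  field_simp
  nlinarith

section Refinement

variable {E : Type*} [NormedAddCommGroup E] [NormedSpace ℝ E] [FiniteDimensional ℝ E]

theorem exists_cover_card_le_of_classes {ι : Type*} (D : Finset E) (I : Finset ι)
    (cls : E → ι) (hcls : ∀ p ∈ D, cls p ∈ I) (center : ι → E) (R ρ : ι → ℝ)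
    (hρ : ∀ i, 0 < ρ i) (hR : ∀ p ∈ D, dist p (center (cls p)) ≤ R (cls p)) {N : ℕ}
    (hN : ∀ i ∈ I, (1 + 2 * R i / ρ i) ^ finrank ℝ E ≤ N) :
    ∃ C' : Finset E, C'.card ≤ I.card * N ∧ ∀ p ∈ D, ∃ c ∈ C', dist p c ≤ ρ (cls p) := by
  classical
  choose F hFsub hFsep hFcov using fun i =>
    exists_subset_isSeparated_isCover (D.filter (cls · = i)) (ρ i).toNNReal
  have hFcard : ∀ i ∈ I, (F i).card ≤ N := by
    intro i hi
    rcases (F i).eq_empty_or_nonempty with hempty | ⟨f, hf⟩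
    · simp [hempty]
    have hFR : (F i : Set E) ⊆ closedBall (center i) (R i) := fun x hx => by
      obtain ⟨hxD, rfl⟩ := Finset.mem_filter.1 (hFsub i hx)
      exact mem_closedBall.2 (hR x hxD)
    have hRi : 0 ≤ R i := dist_nonneg.trans (mem_closedBall.1 (hFR hf))
    have hcard := IsSeparated.card_le_of_subset_closedBall (by simpa using hρ i) hRi
      (hFsep i) hFR
    rw [Real.coe_toNNReal _ (hρ i).le] at hcard
    exact_mod_cast hcard.trans (hN i hi)
  refine ⟨I.biUnion F, ?_, fun p hp => ?_⟩
  · calc (I.biUnion F).card ≤ ∑ i ∈ I, (F i).card := Finset.card_biUnion_le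
      _ ≤ ∑ _i ∈ I, N := Finset.sum_le_sum hFcard
      _ = I.card * N := by rw [Finset.sum_const, smul_eq_mul]
  · have hpD : p ∈ (D.filter (cls · = cls p) : Set E) := by simpa using hp
    obtain ⟨c, hc, hpc⟩ :=
      Set.mem_iUnion₂.1 (isCover_iff_subset_iUnion_closedBall.1 (hFcov (cls p)) hpD)
    refine ⟨c, Finset.mem_biUnion.2 ⟨cls p, hcls p hp, hc⟩, ?_⟩
    rwa [mem_closedBall, Real.coe_toNNReal _ (hρ _).le] at hpc

theorem exists_refined_centers_dist_le_two_mul_max (D C : Finset E) (hC : C.Nonempty)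
    {b ε : ℝ} (hb : 0 < b) (hε : 0 < ε) {M N : ℕ} (hM : 0 < M)
    (hDM : ∀ p ∈ D, infDist p (C : Set E) ≤ b * (1 + ε) ^ M)
    (hN : (2 + 1 / ε) ^ finrank ℝ E ≤ N) :
    ∃ C' : Finset E, C'.card ≤ C.card * M * N ∧
      ∀ p ∈ D, ∃ c ∈ C', dist p c ≤ 2 * ε * max b (infDist p (C : Set E)) := by
  choose near hnearC hnear using fun p : E =>
    C.finite_toSet.isCompact.exists_infDist_eq_dist (by exact_mod_cast hC) p
  choose! scale hscaleM hscale_upper hscale_lower using fun p hp =>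
    exists_lt_le_mul_pow_succ_and_mul_pow_le_max hM (hDM p hp)
  obtain ⟨C', hC'card, hC'⟩ := exists_cover_card_le_of_classes D (C ×ˢ Finset.range M)
    (fun p => (near p, scale p))
    (fun p hp => Finset.mem_product.2 ⟨hnearC p, Finset.mem_range.2 (hscaleM p hp)⟩)
    Prod.fst (fun i => b * (1 + ε) ^ (i.2 + 1)) (fun i => 2 * ε * (b * (1 + ε) ^ i.2))
    (fun i => by positivity) (fun p hp => (hnear p).symm ▸ hscale_upper p hp)
    (fun i _ => by convert hN using 2; field_simp; ring)
  refine ⟨C', by simpa [Finset.card_product] using hC'card, fun p hp => ?_⟩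
  obtain ⟨c, hc, hpc⟩ := hC' p hp
  exact ⟨c, hc, hpc.trans (by gcongr; exact hscale_lower p hp)⟩

end Refinement

section KMedian

variable {d : ℕ} {D : Finset (EuclideanSpace ℝ (Fin d))}

theorem kmedCost_nonneg (C : Set (EuclideanSpace ℝ (Fin d))) : 0 ≤ kmedCost d D C :=
  Finset.sum_nonneg fun _ _ => infDist_nonneg

theorem infDist_le_kmedCost {p : EuclideanSpace ℝ (Fin d)} (hp : p ∈ D)
    (C : Set (EuclideanSpace ℝ (Fin d))) : infDist p C ≤ kmedCost d D C :=
  Finset.single_le_sum (f := (infDist · C)) (fun _ _ => infDist_nonneg) hp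

theorem kmedOPT_le_kmedCost {m : ℕ} {C : Finset (EuclideanSpace ℝ (Fin d))}
    (hC : C.Nonempty) (hCm : C.card ≤ m) : kmedOPT d m D ≤ kmedCost d D C :=
  csInf_le ⟨0, by rintro _ ⟨C, -, -, rfl⟩; exact kmedCost_nonneg _⟩ ⟨C, hC, hCm, rfl⟩

theorem le_kmedOPT {m : ℕ} {a : ℝ} (hm : 1 ≤ m)
    (h : ∀ C : Finset (EuclideanSpace ℝ (Fin d)), C.Nonempty → C.card ≤ m →
      a ≤ kmedCost d D C) : a ≤ kmedOPT d m D :=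
  le_csInf ⟨_, {0}, Finset.singleton_nonempty 0, by simpa using hm, rfl⟩
    (by rintro _ ⟨C, hC, hCm, rfl⟩; exact h C hC hCm)

theorem kmedCost_le_card_mul_add_two_mul_kmedCost {C C' : Finset (EuclideanSpace ℝ (Fin d))}
    {b ε : ℝ} (hb : 0 ≤ b) (hε : 0 ≤ ε) (hε2 : ε ≤ 1 / 2)
    (h : ∀ p ∈ D, ∃ c ∈ C', dist p c ≤ 2 * ε * max b (infDist p (C : Set _))) :
    kmedCost d D C' ≤ D.card * b + 2 * ε * kmedCost d D C := by
  have hterm : ∀ p ∈ D, infDist p (C' : Set _) ≤ b + 2 * ε * infDist p (C : Set _) := by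
    intro p hp
    obtain ⟨c, hc, hpc⟩ := h p hp
    have hr := infDist_nonneg (x := p) (s := (C : Set (EuclideanSpace ℝ (Fin d))))
    refine (infDist_le_dist_of_mem (Finset.mem_coe.2 hc)).trans (hpc.trans ?_)
    rcases max_cases b (infDist p (C : Set _)) with ⟨hmax, -⟩ | ⟨hmax, -⟩ <;> rw [hmax] <;>
      nlinarith
  calc kmedCost d D C' ≤ ∑ p ∈ D, (b + 2 * ε * infDist p (C : Set _)) :=
        Finset.sum_le_sum hterm
    _ = D.card * b + 2 * ε * kmedCost d D C := by
        rw [Finset.sum_add_distrib, Finset.sum_const, nsmul_eq_mul, ← Finset.mul_sum]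
        rfl

theorem kmedOPT_le_three_mul_kmedCost {k k' : ℕ} {ε : ℝ} (hD : D.Nonempty) (hε : 0 < ε)
    (hε2 : ε ≤ 1 / 2)
    (hk' : k * ⌈(1 / ε) ^ (2 * (d : ℝ))⌉₊ *
      ⌈Real.log ((D.card : ℝ) / ε) / Real.log (1 + ε)⌉₊ ≤ k')
    {C : Finset (EuclideanSpace ℝ (Fin d))} (hC : C.Nonempty) (hCk : C.card ≤ k) :
    kmedOPT d k' D ≤ 3 * ε * kmedCost d D C := by
  set n := D.card
  set N := ⌈(1 / ε) ^ (2 * (d : ℝ))⌉₊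
  set M := ⌈Real.log (n / ε) / Real.log (1 + ε)⌉₊
  set W := kmedCost d D C
  have hn : (1 : ℝ) ≤ n := by exact_mod_cast hD.card_pos
  have hnε : 1 < n / ε := by rw [lt_div_iff₀ hε]; linarith
  have hM : 0 < M := Nat.ceil_pos.2 (div_pos (Real.log_pos hnε) (Real.log_pos (by linarith)))
  have hN : (2 + 1 / ε) ^ finrank ℝ (EuclideanSpace ℝ (Fin d)) ≤ N := by
    rw [finrank_euclideanSpace_fin]
    exact (two_add_one_div_pow_le_rpow hε hε2 d).trans (Nat.le_ceil _)
  have hW0 : 0 ≤ W := kmedCost_nonneg _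
  rcases hW0.eq_or_lt with hW | hW
  · have hN0 : 0 < N := Nat.ceil_pos.2 (by positivity)
    have hkk' : k ≤ k' :=
      ((Nat.le_mul_of_pos_right k hN0).trans (Nat.le_mul_of_pos_right _ hM)).trans hk'
    calc kmedOPT d k' D ≤ W := kmedOPT_le_kmedCost hC (hCk.trans hkk')
      _ = 3 * ε * W := by rw [← hW, mul_zero]
  set b := ε * W / n with hb
  have hb0 : 0 < b := by positivity
  have hDM : ∀ p ∈ D, infDist p (C : Set _) ≤ b * (1 + ε) ^ M := fun p hp => calc
    infDist p (C : Set _) ≤ W := infDist_le_kmedCost hp _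
    _ = b * (n / ε) := by rw [hb]; field_simp
    _ ≤ b * (1 + ε) ^ M := by gcongr; exact le_pow_natCeil_log_div_log (by linarith)
  obtain ⟨C', hC'card, hC'⟩ :=
    exists_refined_centers_dist_le_two_mul_max D C hC hb0 hε hM hDM hN
  obtain ⟨p, hp⟩ := hD
  obtain ⟨c, hc, -⟩ := hC' p hp
  have hC'k' : C'.card ≤ k' := hC'card.trans <| by
    rw [mul_right_comm]
    exact (Nat.mul_le_mul_right _ (Nat.mul_le_mul_right _ hCk)).trans hk'
  calc kmedOPT d k' D ≤ kmedCost d D C' := kmedOPT_le_kmedCost ⟨c, hc⟩ hC'k'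
    _ ≤ n * b + 2 * ε * W := kmedCost_le_card_mul_add_two_mul_kmedCost hb0.le hε.le hε2 hC'
    _ = 3 * ε * W := by rw [hb]; field_simp; ring

end KMedian

/-- for `k' = k·(1/ε)^{c·d}·⌈log(n/ε)/log(1+ε)⌉`, with a suitable
absolute constant `c`, we have `OPT_{k'} ≤ 3ε·OPT_k`. -/
theorem OPT_kprime_le :
    ∃ c : ℝ, 0 < c ∧
      ∀ (d k : ℕ) (D : Finset (EuclideanSpace ℝ (Fin d))) (ε : ℝ),
        D.Nonempty → 1 ≤ k → 0 < ε → ε ≤ 1 / 2 →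
        ∀ k' : ℕ,
          k * ⌈(1 / ε) ^ (c * (d : ℝ))⌉₊ *
            ⌈Real.log ((D.card : ℝ) / ε) / Real.log (1 + ε)⌉₊ ≤ k' →
          kmedOPT d k' D ≤ 3 * ε * kmedOPT d k D := by
  refine ⟨2, two_pos, fun d k D ε hD hk hε hε2 k' hk' => ?_⟩
  have h3ε : 0 < 3 * ε := by positivity
  rw [← div_le_iff₀' h3ε]
  refine le_kmedOPT hk fun C hC hCk => ?_
  rw [div_le_iff₀' h3ε]
  exact kmedOPT_le_three_mul_kmedCost hD hε hε2 hk' hC hCk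
end
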